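/- Lower bound on the number of primary edge subsets: for a sink node t and nonnegative integer β_t ≤ C_t − ω, every β_t-element subset of the input edges In(t) of t is a size-β_t primary edge subset for t; hence |A_t(β_t)| ≥ C(|In(t)|, β_t). -/

import Mathlib

/-! An input edge `e` of `t` is itself a path `[e]` to `t`, so every cut separating `t` from a set
`ρ` of input edges must contain `ρ`. Hence `ρ` is the only minimum cut separating `t` from `ρ`,
and in particular it is the primary one. -/

open Finset Matrix

/-- `l` is a nonempty directed trail: consecutive edges are adjacent. -/
def IsTrail {V E : Type*} (tail head : E → V) (l : List E) : Prop :=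
  l ≠ [] ∧ l.Chain' (fun a b => head a = tail b)

/-- A directed path from the edge `e` to the node `t`. -/
def EPath {V E : Type*} (tail head : E → V) (e : E) (t : V) (l : List E) : Prop :=
  IsTrail tail head l ∧ l.head? = some e ∧ ∃ f, l.getLast? = some f ∧ head f = t

/-- A directed path from the node `s` to the node `t`. -/
def NPath {V E : Type*} (tail head : E → V) (s t : V) (l : List E) : Prop :=
  IsTrail tail head l ∧ (∃ f, l.head? = some f ∧ tail f = s) ∧
    ∃ g, l.getLast? = some g ∧ head g = t

/-- `A` is a cut separating the node `t` from the edge subset `ξ`: every directed path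
from an edge of `ξ` to `t` meets `A`. -/
def SeparatesF {V E : Type*} (tail head : E → V) (ξ : Finset E) (t : V) (A : Finset E) : Prop :=
  ∀ e ∈ ξ, ∀ l : List E, EPath tail head e t l → ∃ a ∈ A, a ∈ l

/-- `A` is a cut separating the node `t` from the node `s`. -/
def SeparatesN {V E : Type*} (tail head : E → V) (s t : V) (A : Finset E) : Prop :=
  ∀ l : List E, NPath tail head s t l → ∃ a ∈ A, a ∈ l

/-- Minimum cut capacity separating `t` from the edge subset `ξ`. -/
noncomputable def mincutE {V E : Type*} (tail head : E → V) (ξ : Finset E) (t : V) : ℕ :=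
  sInf {n | ∃ A : Finset E, SeparatesF tail head ξ t A ∧ A.card = n}

/-- Minimum cut capacity separating `t` from the node `s`. -/
noncomputable def mincutN {V E : Type*} (tail head : E → V) (s t : V) : ℕ :=
  sInf {n | ∃ A : Finset E, SeparatesN tail head s t A ∧ A.card = n}

/-- `A` is a minimum cut separating `t` from `ξ`. -/
def IsMinCut {V E : Type*} (tail head : E → V) (ξ : Finset E) (t : V) (A : Finset E) : Prop :=
  SeparatesF tail head ξ t A ∧ A.card = mincutE tail head ξ t

/-- `A` is the primary minimum cut separating `t` from `ξ`: a minimum cut that separates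
`t` from every minimum cut separating `t` from `ξ`. -/
def IsPrimaryMinCut {V E : Type*} (tail head : E → V) (ξ : Finset E) (t : V) (A : Finset E) :
    Prop :=
  IsMinCut tail head ξ t A ∧ ∀ B : Finset E, IsMinCut tail head ξ t B → SeparatesF tail head B t A

/-- `η` is primary for `t`: `η` is the primary minimum cut separating `t` from `η` itself. -/
def PrimaryFor {V E : Type*} (tail head : E → V) (η : Finset E) (t : V) : Prop :=
  IsPrimaryMinCut tail head η t η

/-- The directed graph is acyclic: there is a topological order on the edges. -/
def Acyclic {V E : Type*} (tail head : E → V) : Prop :=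
  ∃ f : E → ℕ, ∀ d e, head d = tail e → f d < f e

section PrimaryInputEdges

variable {V E : Type*} {tail head : E → V} {t : V}

theorem EPath.singleton {e : E} (he : head e = t) : EPath tail head e t [e] :=
  ⟨⟨List.cons_ne_nil _ _, List.isChain_singleton _⟩, rfl, e, rfl, he⟩

theorem separatesF_self (ξ : Finset E) : SeparatesF tail head ξ t ξ :=
  fun e he _ hl => ⟨e, he, List.mem_of_mem_head? hl.2.1⟩

theorem SeparatesF.subset {ρ A : Finset E} (hρ : ∀ e ∈ ρ, head e = t)
    (hA : SeparatesF tail head ρ t A) : ρ ⊆ A := by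
  intro e he
  obtain ⟨a, ha, hae⟩ := hA e he [e] (EPath.singleton (hρ e he))
  rwa [List.mem_singleton.mp hae] at ha

theorem mincutE_eq_card {ρ : Finset E} (hρ : ∀ e ∈ ρ, head e = t) :
    mincutE tail head ρ t = ρ.card :=
  le_antisymm (Nat.sInf_le ⟨ρ, separatesF_self ρ, rfl⟩) <|
    le_csInf ⟨ρ.card, ρ, separatesF_self ρ, rfl⟩ fun _ ⟨_, hA, hcard⟩ =>
      hcard ▸ card_le_card (hA.subset hρ)

theorem primaryFor_of_forall_head_eq {ρ : Finset E} (hρ : ∀ e ∈ ρ, head e = t) :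
    PrimaryFor tail head ρ t := by
  have hmin : mincutE tail head ρ t = ρ.card := mincutE_eq_card hρ
  refine ⟨⟨separatesF_self ρ, hmin.symm⟩, fun B ⟨hB, hBcard⟩ => ?_⟩
  have hρB : ρ = B := eq_of_subset_of_card_le (hB.subset hρ) (by rw [hBcard, hmin])
  exact hρB ▸ separatesF_self ρ

end PrimaryInputEdges

theorem Finset.choose_card_le_ncard_of_forall_powersetCard {α : Type*} [Finite α]
    {P : Finset α → Prop} (s : Finset α) (k : ℕ) (hP : ∀ ρ ⊆ s, ρ.card = k → P ρ) :
    s.card.choose k ≤ {ρ : Finset α | ρ.card = k ∧ P ρ}.ncard := by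
  rw [← card_powersetCard, ← Set.ncard_coe_finset]
  refine Set.ncard_le_ncard (fun ρ hρ => ?_) (Set.toFinite _)
  obtain ⟨hρs, hρk⟩ := mem_powersetCard.mp hρ
  exact ⟨hρk, hP ρ hρs hρk⟩

theorem stmt16_general {V E : Type*} [Fintype E] [DecidableEq V]
    (tail head : E → V) (t : V) (β : ℕ) :
    (∀ ρ : Finset E, ρ ⊆ Finset.univ.filter (fun e => head e = t) → ρ.card = β →
        PrimaryFor tail head ρ t) ∧
      ((Finset.univ.filter (fun e => head e = t)).card.choose β ≤
        {ρ : Finset E | ρ.card = β ∧ PrimaryFor tail head ρ t}.ncard) := by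
  have hprimary : ∀ ρ : Finset E, ρ ⊆ Finset.univ.filter (fun e => head e = t) → ρ.card = β →
      PrimaryFor tail head ρ t := fun ρ hρ _ =>
    primaryFor_of_forall_head_eq fun e he => (mem_filter.mp (hρ he)).2
  exact ⟨hprimary, choose_card_le_ncard_of_forall_powersetCard _ β hprimary⟩

/-- Lower bound on the number of primary edge subsets: if the sink `t` has no output
edges, then every `β_t`-element subset of the input edges `In(t)` of `t` is a size-`β_t`
primary edge subset for `t`; hence `|A_t(β_t)| ≥ C(|In(t)|, β_t)`. -/
theorem stmt16 {V E : Type*} [Fintype E] [DecidableEq E] [DecidableEq V]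
    (tail head : E → V) (s t : V) (ω β : ℕ)
    (htout : ∀ e, tail e ≠ t)
    (hβ : β ≤ mincutN tail head s t - ω) :
    (∀ ρ : Finset E, ρ ⊆ Finset.univ.filter (fun e => head e = t) → ρ.card = β →
        PrimaryFor tail head ρ t) ∧
      ((Finset.univ.filter (fun e => head e = t)).card.choose β ≤
        {ρ : Finset E | ρ.card = β ∧ PrimaryFor tail head ρ t}.ncard) :=
  stmt16_general tail head t β
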